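/- Let G be a profinite group, K a closed normal subgroup of G, and suppose K is an F*-group and N is any open normal subgroup of G. Then the image KN/N is contained in F*(G/N). -/

import Mathlib

/-- A subgroup `H` of `G` is subnormal: there is a finite chain of subgroups from `H`
to `G`, each normal in the next. -/
def IsSubnormalSub {G : Type*} [Group G] (H : Subgroup G) : Prop :=
  ∃ (n : ℕ) (s : ℕ → Subgroup G), s 0 = H ∧ s n = ⊤ ∧
    ∀ i < n, s i ≤ s (i + 1) ∧ ((s i).subgroupOf (s (i + 1))).Normal

/-- A group is quasisimple if it is perfect and its central quotient is simple. -/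
def IsQuasisimple (G : Type*) [Group G] : Prop :=
  commutator G = ⊤ ∧ IsSimpleGroup (G ⧸ Subgroup.center G)

/-- A component of a group: a subnormal quasisimple subgroup. -/
def IsComponentFin {G : Type*} [Group G] (Q : Subgroup G) : Prop :=
  IsSubnormalSub Q ∧ IsQuasisimple Q

/-- The Fitting subgroup: the subgroup generated by all normal nilpotent subgroups. -/
def fittingSub (G : Type*) [Group G] : Subgroup G :=
  ⨆ H ∈ {H : Subgroup G | H.Normal ∧ Group.IsNilpotent H}, H

/-- The layer: the subgroup generated by all components. -/
def layerSub (G : Type*) [Group G] : Subgroup G :=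
  ⨆ Q ∈ {Q : Subgroup G | IsComponentFin Q}, Q

/-- The generalised Fitting subgroup `F*(G) = F(G) E(G)`. -/
def fstarSub (G : Type*) [Group G] : Subgroup G := fittingSub G ⊔ layerSub G

/-- A topological (profinite) group is pro-`π` if every prime dividing the order of a
finite quotient by an open normal subgroup lies in `π`. -/
def IsProPi (π : Set ℕ) (G : Type*) [Group G] [TopologicalSpace G] : Prop :=
  ∀ N : Subgroup G, N.Normal → IsOpen (N : Set G) →
    ∀ p : ℕ, p.Prime → p ∣ Nat.card (G ⧸ N) → p ∈ π

/-- A topological group is pronilpotent if all its quotients by open normal subgroups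
are nilpotent. -/
def IsPronilpotent (G : Type*) [Group G] [TopologicalSpace G] : Prop :=
  ∀ (N : Subgroup G) (hN : N.Normal), IsOpen (N : Set G) →
    haveI := hN
    Group.IsNilpotent (G ⧸ N)

/-- A component of a profinite group: a finite closed subnormal quasisimple subgroup. -/
def IsComponentPro {G : Type*} [Group G] [TopologicalSpace G] (Q : Subgroup G) : Prop :=
  IsSubnormalSub Q ∧ IsClosed (Q : Set G) ∧ Finite Q ∧ IsQuasisimple Q

/-- The generalised Fitting subgroup of a topological group: the closed subgroup
generated by all closed normal pronilpotent subgroups and all components. -/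
def genFitting (G : Type*) [Group G] [TopologicalSpace G] [IsTopologicalGroup G] : Subgroup G :=
  (⨆ H ∈ {H : Subgroup G | (H.Normal ∧ IsClosed (H : Set G) ∧ IsPronilpotent H) ∨
      IsComponentPro H}, H).topologicalClosure

/-- A topological group is Fitting-degenerate if its generalised Fitting subgroup is trivial. -/
def FittingDegenerate (G : Type*) [Group G] [TopologicalSpace G] [IsTopologicalGroup G] : Prop :=
  genFitting G = ⊥

/-- A topological group is Fitting-regular if no nontrivial quotient by a closed normal
subgroup is Fitting-degenerate. -/
def FittingRegular (G : Type*) [Group G] [TopologicalSpace G] [IsTopologicalGroup G] : Prop :=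
  ∀ (N : Subgroup G) (hN : N.Normal), IsClosed (N : Set G) → N ≠ ⊤ →
    haveI := hN
    ¬ FittingDegenerate (G ⧸ N)

/-!
Since `N` is open, `G ⧸ N` is finite and discrete, so the image of `K` is already the image of the
(not necessarily closed) subgroup generated by the closed normal pronilpotent subgroups `H` and the
components of `K`. The image `A` of such an `H` is a nilpotent normal subgroup of the normal
subgroup `B = KN/N` of `G ⧸ N`. Each Sylow subgroup of `A` is characteristic in `A`, hence a normal
`p`-subgroup of `B`, hence contained in the `p`-core `O_p(B)`; being characteristic in `B`, this
`p`-core is a normal `p`-subgroup of `G ⧸ N`, so it lies in the Fitting subgroup. The image of a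
component is either trivial or a quotient of a quasisimple group by a proper normal subgroup,
which is again quasisimple, and it stays subnormal; so it is a component of `G ⧸ N`.
-/

open Subgroup

theorem IsSubnormalSub.isSubnormal {G : Type*} [Group G] {H : Subgroup G}
    (h : IsSubnormalSub H) : H.IsSubnormal := by
  obtain ⟨n, s, rfl, hn, hs⟩ := h
  suffices ∀ i ≤ n, (s i).IsSubnormal from this 0 n.zero_le
  intro i hi
  induction hi using Nat.decreasingInduction with
  | self => exact hn ▸ .top
  | of_succ i hi ih => exact .step _ _ (hs i hi).1 ih (hs i hi).2

theorem Subgroup.IsSubnormal.isSubnormalSub {G : Type*} [Group G] {H : Subgroup G}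
    (h : H.IsSubnormal) : IsSubnormalSub H := by
  obtain ⟨n, s, hmono, hnormal, h0, hn⟩ := IsSubnormal.isSubnormal_iff.mp h
  exact ⟨n, s, h0, hn, fun i _ => ⟨hmono i.le_succ, hnormal i⟩⟩

theorem Subgroup.map_center_le_of_surjective {X Y : Type*} [Group X] [Group Y] {f : X →* Y}
    (hf : Function.Surjective f) : (center X).map f ≤ center Y := by
  rintro _ ⟨z, hz, rfl⟩
  refine mem_center_iff.mpr fun y => ?_
  obtain ⟨x, rfl⟩ := hf y
  rw [← map_mul, ← map_mul, mem_center_iff.mp hz]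

theorem IsQuasisimple.of_surjective {X Y : Type*} [Group X] [Group Y] [Nontrivial Y]
    (hX : IsQuasisimple X) {f : X →* Y} (hf : Function.Surjective f) : IsQuasisimple Y := by
  have hperfect : commutator Y = ⊤ :=
    calc commutator Y = ⁅f.range, f.range⁆ := by
          rw [f.range_eq_top.mpr hf, _root_.commutator_def]
      _ = (commutator X).map f := (map_commutator_eq _ f).symm
      _ = ⊤ := by rw [hX.1, map_top_of_surjective f hf]
  have : Nontrivial (Y ⧸ center Y) := by
    rw [QuotientGroup.nontrivial_iff, Ne, ← commutator_eq_bot_iff_center_eq_top, hperfect]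
    exact top_ne_bot
  have := hX.2
  refine ⟨hperfect, IsSimpleGroup.isSimpleGroup_of_surjective
    (QuotientGroup.map _ _ f (map_le_iff_le_comap.mp (map_center_le_of_surjective hf))) ?_⟩
  exact QuotientGroup.map_surjective_of_surjective _ _ f
    (QuotientGroup.mk_surjective.comp hf) _

section PCore

variable (p : ℕ) (X : Type*) [Group X]

def pCore : Subgroup X := sSup {P | P.Normal ∧ IsPGroup p P}

variable {p X}

theorem le_pCore {P : Subgroup X} (hn : P.Normal) (hp : IsPGroup p P) : P ≤ pCore p X :=
  le_sSup ⟨hn, hp⟩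

theorem isPGroup_pCore : IsPGroup p (pCore p X) :=
  Sylow.sSup_of_normal _ (fun _ hP => hP.2) fun _ hP => hP.1

instance pCore_characteristic : (pCore p X).Characteristic := by
  refine characteristic_iff_le_comap.mpr fun φ => sSup_le fun P ⟨hn, hp⟩ => ?_
  rw [← map_le_iff_le_comap]
  exact le_pCore (hn.map _ φ.surjective) (hp.map _)

end PCore

theorem Subgroup.eq_top_of_forall_sylow_le {G : Type*} [Group G] [Finite G] {T : Subgroup G}
    (h : ∀ (p : ℕ) [Fact p.Prime] (P : Sylow p G), (P : Subgroup G) ≤ T) : T = ⊤ := by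
  refine T.eq_top_of_card_eq (Nat.dvd_antisymm T.card_subgroup_dvd_card ?_)
  refine (Nat.dvd_iff_prime_pow_dvd_dvd _ _).mpr fun p k hp hpk => ?_
  have : Fact p.Prime := ⟨hp⟩
  obtain ⟨P⟩ := (inferInstance : Nonempty (Sylow p G))
  exact (P.pow_dvd_card_of_pow_dvd_card hpk).trans (card_dvd_of_le (h p P))

theorem le_fittingSub_of_normal {X : Type*} [Group X] {H : Subgroup X} (hn : H.Normal)
    (hH : Group.IsNilpotent H) : H ≤ fittingSub X :=
  le_biSup id (show H ∈ {H : Subgroup X | H.Normal ∧ Group.IsNilpotent H} from ⟨hn, hH⟩)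

theorem IsPronilpotent.isNilpotent_of_surjective {H Y : Type*} [Group H] [TopologicalSpace H]
    [Group Y] [TopologicalSpace Y] [DiscreteTopology Y] (hH : IsPronilpotent H) {f : H →* Y}
    (hf : Continuous f) (hsurj : Function.Surjective f) : Group.IsNilpotent Y := by
  have hker : IsOpen (f.ker : Set H) := by
    rw [MonoidHom.coe_ker]
    exact (isOpen_discrete _).preimage hf
  have := hH f.ker inferInstance hker
  exact Group.nilpotent_of_mulEquiv (QuotientGroup.quotientKerEquivOfSurjective f hsurj)

section NormalSubgroup

variable {X : Type*} [Group X] [Finite X] {B : Subgroup X} [B.Normal]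

theorem map_subtype_le_fittingSub_of_isPGroup {p : ℕ} [Fact p.Prime] {P : Subgroup B}
    [P.Normal] (hP : IsPGroup p P) : P.map B.subtype ≤ fittingSub X :=
  (map_mono (le_pCore inferInstance hP)).trans
    (le_fittingSub_of_normal inferInstance (isPGroup_pCore.map B.subtype).isNilpotent)

theorem map_subtype_le_fittingSub_of_isNilpotent {A : Subgroup B} [A.Normal]
    [Group.IsNilpotent A] : A.map B.subtype ≤ fittingSub X := by
  rw [map_le_iff_le_comap, ← subgroupOf_eq_top]
  refine eq_top_of_forall_sylow_le fun p _ Q => ?_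
  have := Sylow.characteristic_of_normal Q inferInstance
  have hQ := map_subtype_le_fittingSub_of_isPGroup (Q.isPGroup'.map A.subtype)
  rwa [map_map, map_le_iff_le_comap] at hQ

theorem map_map_subtype_le_fittingSub {K : Type*} [Group K] [TopologicalSpace K]
    [TopologicalSpace X] [DiscreteTopology X] {f : K →* B} (hf : Continuous f)
    (hsurj : Function.Surjective f) {H : Subgroup K} (hn : H.Normal) (hH : IsPronilpotent H) :
    (H.map f).map B.subtype ≤ fittingSub X := by
  have : (H.map f).Normal := hn.map f hsurj
  have : Group.IsNilpotent (H.map f) :=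
    hH.isNilpotent_of_surjective ((hf.comp continuous_subtype_val).subtype_mk _)
      (f.subgroupMap_surjective H)
  exact map_subtype_le_fittingSub_of_isNilpotent

end NormalSubgroup

theorem map_map_subtype_le_layerSub {G Y : Type*} [Group G] [Group Y] {f : G →* Y}
    (hf : Function.Surjective f) {K : Subgroup G} (hK : K.Normal) {H : Subgroup K}
    (hsub : IsSubnormalSub H) (hq : IsQuasisimple H) :
    (H.map K.subtype).map f ≤ layerSub Y := by
  rcases eq_or_ne ((H.map K.subtype).map f) ⊥ with hbot | hne
  · exact hbot ▸ bot_le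
  have hquasi : IsQuasisimple ((H.map K.subtype).map f) := by
    rw [map_map] at hne ⊢
    have := (nontrivial_iff_ne_bot _).mpr hne
    exact hq.of_surjective ((f.comp K.subtype).subgroupMap_surjective H)
  have hsubnormal := (hsub.isSubnormal.trans' hK.isSubnormal).map hf
  exact le_biSup id (show _ ∈ {Q : Subgroup Y | IsComponentFin Q} from
    ⟨hsubnormal.isSubnormalSub, hquasi⟩)

theorem MonoidHom.range_le_map_of_topologicalClosure_eq_top {G Y : Type*} [Group G]
    [TopologicalSpace G] [IsTopologicalGroup G] [Group Y] [TopologicalSpace Y]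
    [DiscreteTopology Y] {f : G →* Y} (hf : Continuous f) {S : Subgroup G}
    (hS : S.topologicalClosure = ⊤) : f.range ≤ S.map f := by
  rw [f.range_eq_map, ← hS, map_le_iff_le_comap]
  exact S.topologicalClosure_minimal (le_comap_map f S)
    ((isClosed_discrete (S.map f : Set Y)).preimage hf)

theorem fstar_subgroup_image_le_fstar_general (G : Type*) [Group G] [TopologicalSpace G] [IsTopologicalGroup G] [CompactSpace G]
    (K : Subgroup G) (hKn : K.Normal)
    (hK : genFitting K = ⊤)
    (N : Subgroup G) [N.Normal] (hNo : IsOpen (N : Set G)) :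
    K.map (QuotientGroup.mk' N) ≤ fstarSub (G ⧸ N) := by
  have : DiscreteTopology (G ⧸ N) := QuotientGroup.discreteTopology hNo
  have : Finite (G ⧸ N) := finite_of_compact_of_discrete
  set B := K.map (QuotientGroup.mk' N)
  have : B.Normal := hKn.map _ (QuotientGroup.mk'_surjective N)
  set φ := (QuotientGroup.mk' N).subgroupMap K
  have hφ : Continuous φ :=
    (QuotientGroup.continuous_mk.comp continuous_subtype_val).subtype_mk _
  have hφsurj : Function.Surjective φ := MonoidHom.subgroupMap_surjective _ K
  have hdense := φ.range_le_map_of_topologicalClosure_eq_top hφ hK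
  rw [φ.range_eq_top.mpr hφsurj] at hdense
  calc B = (⊤ : Subgroup B).map B.subtype := by rw [← MonoidHom.range_eq_map, range_subtype]
    _ ≤ _ := map_mono hdense
    _ ≤ fstarSub (G ⧸ N) := by
        simp only [Subgroup.map_iSup, iSup_le_iff]
        rintro H (⟨hn, -, hH⟩ | ⟨hsub, -, -, hq⟩)
        · exact (map_map_subtype_le_fittingSub hφ hφsurj hn hH).trans le_sup_left
        · have hcomp :
              (H.map φ).map B.subtype = (H.map K.subtype).map (QuotientGroup.mk' N) := by
            rw [map_map, map_map]
            rfl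
          rw [hcomp]
          exact (map_map_subtype_le_layerSub (QuotientGroup.mk'_surjective N) hKn hsub hq).trans
            le_sup_right

/-- If `K` is a closed normal subgroup of a profinite group `G` with `K = F*(K)`,
then the image of `K` in any finite quotient `G/N` lies in `F*(G/N)`. -/
theorem fstar_subgroup_image_le_fstar (G : Type*) [Group G] [TopologicalSpace G] [IsTopologicalGroup G] [CompactSpace G] [T2Space G] [TotallyDisconnectedSpace G]
    (K : Subgroup G) (hKn : K.Normal) (hKc : IsClosed (K : Set G))
    (hK : genFitting K = ⊤)
    (N : Subgroup G) [N.Normal] (hNo : IsOpen (N : Set G)) :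
    K.map (QuotientGroup.mk' N) ≤ fstarSub (G ⧸ N) :=
  fstar_subgroup_image_le_fstar_general G K hKn hK N hNo
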